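/- For every cycle c on a finite connected graph H, there exists a cactus forest (C_1, ..., C_k) of depth at most |V_H| that encodes c. -/

import Mathlib

/-- An undirected graph (self-loops allowed) given by a symmetric adjacency relation. -/
structure LGraph (V : Type*) where
  Adj : V → V → Prop
  symm : ∀ {a b : V}, Adj a b → Adj b a

/-- A walk on `G`: a nonempty list of vertices with consecutive vertices adjacent. -/
def IsWalkL {V : Type*} (G : LGraph V) (p : List V) : Prop :=
  p ≠ [] ∧ p.Chain' G.Adj

/-- A cycle on `G`: a walk with equal endpoints. -/
def IsCycleL {V : Type*} (G : LGraph V) (p : List V) : Prop :=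
  IsWalkL G p ∧ p.head? = p.getLast?

/-- A simple cycle: repetitions occur only at the two endpoints. -/
def IsSimpleCycleL {V : Type*} (G : LGraph V) (p : List V) : Prop :=
  IsCycleL G p ∧
  ∀ i j : ℕ, i < j → j < p.length → p[i]? = p[j]? → i = 0 ∧ j = p.length - 1

/-- `G` is connected. -/
def LGraph.ConnectedL {V : Type*} (G : LGraph V) : Prop :=
  ∀ u v : V, ∃ p : List V, IsWalkL G p ∧ p.head? = some u ∧ p.getLast? = some v

/-- `c ⊕_k s`: insert the cycle `s` into the walk `c` at position `k`. -/
def oplus {V : Type*} (c : List V) (k : ℕ) (s : List V) : List V :=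
  c.take k ++ s ++ c.drop (k + 1)

/-- A cactus: a rooted finite ordered tree whose vertices are labeled by
(simple) cycles, each child being attached at an index of its parent's cycle. -/
inductive Cactus (V : Type u) : Type u where
  | mk : List V → List (ℕ × Cactus V) → Cactus V

namespace Cactus

/-- The root cycle of a cactus. -/
def rootCycle {V : Type u} : Cactus V → List V
  | .mk ξ _ => ξ

/-- The starting vertex of the root cycle. -/
def root {V : Type u} (C : Cactus V) : Option V :=
  C.rootCycle.head?

mutual
/-- The depth of a cactus (a leaf has depth 1). -/
def depth {V : Type u} : Cactus V → ℕ
  | .mk _ children => 1 + depthList children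

def depthList {V : Type u} : List (ℕ × Cactus V) → ℕ
  | [] => 0
  | (_, c) :: rest => max (depth c) (depthList rest)
end

mutual
/-- The cycle `π(C)` encoded by a cactus: recursively insert the cycles encoded
by the children into the root cycle at the prescribed positions (with
cumulative index shifts). -/
def encode {V : Type u} : Cactus V → List V
  | .mk ξ children => insertAll ξ 0 children

def insertAll {V : Type u} : List V → ℕ → List (ℕ × Cactus V) → List V
  | ξ, _, [] => ξ
  | ξ, sh, (k, c) :: rest =>
      insertAll (oplus ξ (k + sh) (encode c)) (sh + ((encode c).length - 1)) rest
end

end Cactus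

/-- Validity of a cactus over `G`: the root is a simple cycle of `G`, the
attachment indices are nondecreasing and within range, each child's root
cycle starts at the corresponding vertex of the parent cycle, and all
children are valid. -/
inductive CValid {V : Type*} (G : LGraph V) : Cactus V → Prop
  | mk (ξ : List V) (children : List (ℕ × Cactus V))
      (hξ : IsSimpleCycleL G ξ)
      (hmono : List.Chain' (· ≤ ·) (children.map Prod.fst))
      (hrange : ∀ kc ∈ children, kc.1 < ξ.length)
      (hroot : ∀ kc ∈ children, kc.2.root = ξ[kc.1]?)
      (hvalid : ∀ kc ∈ children, CValid G kc.2) :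
      CValid G (.mk ξ children)

/-- Concatenation `p ⊙ q` of walks with matching endpoints. -/
def odot {V : Type*} (p q : List V) : List V := p ++ q.tail

/-- The cycle encoded by a cactus forest: the `⊙`-concatenation of the cycles
encoded by its cacti. -/
def forestEncode {V : Type*} : List (List V) → List V
  | [] => []
  | h :: t => t.foldl odot h

/-!
Induct on the length of the cycle `c`, which starts and ends at `v`. Cut `c` at its first return
to `v`: `c = (v a v) ⊙ c'` with `v ∉ a`, and `c'` is encoded by induction. To encode `v a v` by a
single cactus, erase the loops of `a`: at the current first vertex `u` of the walk, cut off the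
closed subwalk up to the last visit of `u`; it is a shorter cycle, hence by induction a forest,
attached at `u`. What is left of `a` is a path avoiding `v`, which `v` closes up to a simple root
cycle. The erased loops lie in `a` and so avoid `v`: the depth of a cactus is at most the number of
distinct vertices it visits.
-/

open List

section

variable {V : Type*}

theorem forestEncode_cons (p : List V) (l : List (List V)) :
    forestEncode (p :: l) = p ++ (l.map tail).flatten := by
  simp only [forestEncode]
  induction l generalizing p with
  | nil => simp
  | cons q l ih => simp [ih, odot]

theorem cons_flatten_map_tail {u : V} {l : List (List V)}
    (h : ∀ q ∈ l, q.head? = some u ∧ q.getLast? = some u) :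
    u :: (l.map tail).flatten = (l.map dropLast).flatten ++ [u] := by
  induction l with
  | nil => rfl
  | cons q l ih =>
    obtain ⟨hhead, hlast⟩ := h q mem_cons_self
    obtain ⟨d, rfl⟩ := getLast?_eq_some_iff.mp hlast
    rw [map_cons, map_cons, flatten_cons, flatten_cons, ← cons_append,
      cons_head?_tail hhead, dropLast_concat, append_assoc, append_assoc, singleton_append,
      ih fun q hq => h q (mem_cons_of_mem _ hq)]

theorem forestEncode_eq_flatten_dropLast {u : V} {l : List (List V)} (hl : l ≠ [])
    (h : ∀ q ∈ l, q.head? = some u ∧ q.getLast? = some u) :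
    forestEncode l = (l.map dropLast).flatten ++ [u] := by
  obtain ⟨p, l, rfl⟩ := exists_cons_of_ne_nil hl
  obtain ⟨d, rfl⟩ := getLast?_eq_some_iff.mp (h p mem_cons_self).2
  rw [forestEncode_cons, map_cons, flatten_cons, dropLast_concat, append_assoc, append_assoc,
    singleton_append, cons_flatten_map_tail fun q hq => h q (mem_cons_of_mem _ hq)]

theorem exists_closed_append_of_head?_eq {u : V} {s : List V} (hs : s.head? = some u) :
    ∃ L r, s = L ++ r ∧ L.head? = some u ∧ L.getLast? = some u ∧ u ∉ r := by
  obtain ⟨a, b, hab, hua⟩ := eq_append_cons_of_mem (mem_reverse.mpr (mem_of_head? hs))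
  refine ⟨b.reverse ++ [u], a.reverse, ?_, ?_, getLast?_concat, by simpa using hua⟩
  · simpa using congrArg reverse hab
  · rw [← hs, reverse_eq_iff.mp hab]
    simp

theorem isChain_cons_append_singleton_of_congr {R : V → V → Prop} {v w : V} {ξ a : List V}
    (hξ : ξ.IsChain R) (hhead : ξ.head? = a.head?) (hlast : ξ.getLast? = a.getLast?)
    (ha : (v :: a ++ [w]).IsChain R) : (v :: ξ ++ [w]).IsChain R := by
  simp only [cons_append, isChain_cons, isChain_append, head?_append] at ha ⊢
  simp_all

theorem isSimpleCycleL_append_singleton {H : LGraph V} {p : List V} {x : V}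
    (hc : IsCycleL H (p ++ [x])) (hp : p.Nodup) (hx : p.head? = some x) :
    IsSimpleCycleL H (p ++ [x]) := by
  refine ⟨hc, fun i j hij hj heq => ?_⟩
  rw [length_append, length_singleton] at hj
  have hi : i < p.length := by omega
  rw [getElem?_append_left hi] at heq
  rcases (by omega : j < p.length ∨ j = p.length) with hj' | rfl
  · rw [getElem?_append_left hj', getElem?_inj hi hp] at heq
    omega
  · rw [getElem?_concat_length, ← hx, head?_eq_getElem?, getElem?_inj hi hp] at heq
    exact ⟨heq, by simp⟩

theorem oplus_append_cons (A z s : List V) (x : V) :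
    oplus (A ++ x :: z) A.length s = A ++ s ++ z := by
  simp [oplus]

theorem depthList_le {m : ℕ} {ch : List (ℕ × Cactus V)} (h : ∀ kc ∈ ch, kc.2.depth ≤ m) :
    Cactus.depthList ch ≤ m := by
  induction ch with
  | nil => simp [Cactus.depthList]
  | cons kc ch ih =>
    rw [Cactus.depthList]
    exact max_le (h kc mem_cons_self) (ih fun kc' hkc' => h kc' (mem_cons_of_mem _ hkc'))

theorem insertAll_map_append {u : V} {F : List (Cactus V)}
    (hF : ∀ C ∈ F, C.encode.getLast? = some u) (rest : List (ℕ × Cactus V))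
    (A z : List V) (pos sh : ℕ) (hA : A.length = pos + sh) :
    Cactus.insertAll (A ++ u :: z) sh (F.map (pos, ·) ++ rest) =
      Cactus.insertAll (A ++ ((F.map Cactus.encode).map dropLast).flatten ++ u :: z)
        (sh + ((F.map Cactus.encode).map dropLast).flatten.length) rest := by
  induction F generalizing A sh with
  | nil => simp
  | cons C F ih =>
    obtain ⟨d, hd⟩ := getLast?_eq_some_iff.mp (hF C mem_cons_self)
    rw [map_cons, cons_append, Cactus.insertAll, ← hA, oplus_append_cons, hd]
    have := ih (fun C' hC' => hF C' (mem_cons_of_mem _ hC')) (A ++ d) (sh + d.length)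
      (by simp; omega)
    simp only [append_assoc, singleton_append, length_append, length_singleton,
      Nat.add_sub_cancel] at this ⊢
    rw [this]
    simp [hd, Nat.add_assoc]

section Construction

variable [DecidableEq V] (H : LGraph V)

structure IsCactusForestOf (c : List V) (F : List (Cactus V)) : Prop where
  ne_nil : F ≠ []
  valid : ∀ C ∈ F, CValid H C
  root_eq : ∀ C ∈ F, C.root = c.head?
  encode_head? : ∀ C ∈ F, C.encode.head? = c.head?
  encode_getLast? : ∀ C ∈ F, C.encode.getLast? = c.head?
  forestEncode_eq : forestEncode (F.map Cactus.encode) = c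
  depth_le : ∀ C ∈ F, C.depth ≤ c.toFinset.card

/-- `ξ` is the loop erasure of the walk `s`, and `ch` attaches to it the cactus forests of the
erased loops. Attachment indices are absolute: `ξ` sits at index `pos` of the enclosing cycle,
which carries a shift `sh` accumulated from the insertions made to its left. -/
structure IsLoopErasure (s : List V) (pos : ℕ) (ξ : List V) (ch : List (ℕ × Cactus V)) :
    Prop where
  insertAll_eq : ∀ (A z : List V) (sh : ℕ), A.length = pos + sh →
    Cactus.insertAll (A ++ ξ ++ z) sh ch = A ++ s ++ z
  nodup : ξ.Nodup
  subset : ξ ⊆ s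
  head?_eq : ξ.head? = s.head?
  getLast?_eq : ξ.getLast? = s.getLast?
  isChain : ξ.IsChain H.Adj
  valid : ∀ kc ∈ ch, CValid H kc.2
  index_mem : ∀ kc ∈ ch, pos ≤ kc.1 ∧ kc.1 < pos + ξ.length
  sorted : (ch.map Prod.fst).IsChain (· ≤ ·)
  root_eq : ∀ kc ∈ ch, kc.2.root = ξ[kc.1 - pos]?
  depth_le : ∀ kc ∈ ch, kc.2.depth ≤ s.toFinset.card

variable {H}

theorem IsCactusForestOf.eq_flatten_dropLast {c : List V} {F : List (Cactus V)} {u : V}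
    (hF : IsCactusForestOf H c F) (hu : c.head? = some u) :
    c = ((F.map Cactus.encode).map dropLast).flatten ++ [u] := by
  rw [← forestEncode_eq_flatten_dropLast (by simpa using hF.ne_nil), hF.forestEncode_eq]
  simp only [mem_map, forall_exists_index, and_imp, forall_apply_eq_imp_iff₂]
  exact fun C hC => ⟨hu ▸ hF.encode_head? C hC, hu ▸ hF.encode_getLast? C hC⟩

theorem isCactusForestOf_singleton (v : V) : IsCactusForestOf H [v] [.mk [v] []] where
  ne_nil := cons_ne_nil _ _
  valid := by
    simp only [mem_singleton, forall_eq]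
    refine .mk _ _ ⟨⟨⟨cons_ne_nil _ _, isChain_singleton _⟩, rfl⟩, ?_⟩ isChain_nil
      (by simp) (by simp) (by simp)
    intro i j hij hj
    simp at hj
    omega
  root_eq := by simp [Cactus.root, Cactus.rootCycle]
  encode_head? := by simp [Cactus.encode, Cactus.insertAll]
  encode_getLast? := by simp [Cactus.encode, Cactus.insertAll]
  forestEncode_eq := by simp [forestEncode, Cactus.encode, Cactus.insertAll]
  depth_le := by simp [Cactus.depth, Cactus.depthList]

theorem IsLoopErasure.nil (pos : ℕ) : IsLoopErasure H [] pos [] [] where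
  insertAll_eq := by simp [Cactus.insertAll]
  nodup := nodup_nil
  subset := Subset.refl _
  head?_eq := rfl
  getLast?_eq := rfl
  isChain := isChain_nil
  valid := by simp
  index_mem := by simp
  sorted := isChain_nil
  root_eq := by simp
  depth_le := by simp

theorem IsLoopErasure.cons {L r ξ : List V} {ch : List (ℕ × Cactus V)} {F : List (Cactus V)}
    {u : V} {pos : ℕ} (he : IsLoopErasure H r (pos + 1) ξ ch) (hF : IsCactusForestOf H L F)
    (hLu : L.head? = some u) (hur : u ∉ r) (hLr : (L ++ r).IsChain H.Adj) :
    IsLoopErasure H (L ++ r) pos (u :: ξ) (F.map (pos, ·) ++ ch) := by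
  have hL := hF.eq_flatten_dropLast hLu
  set D := ((F.map Cactus.encode).map dropLast).flatten
  have hLlast : L.getLast? = some u := by rw [hL, getLast?_concat]
  have hFlast : ∀ C ∈ F, C.encode.getLast? = some u :=
    fun C hC => hLu ▸ hF.encode_getLast? C hC
  have hcard_L : L.toFinset.card ≤ (L ++ r).toFinset.card := by
    rw [toFinset_append]; exact Finset.card_le_card Finset.subset_union_left
  have hcard_r : r.toFinset.card ≤ (L ++ r).toFinset.card := by
    rw [toFinset_append]; exact Finset.card_le_card Finset.subset_union_right
  exact {
    insertAll_eq := fun A z sh hA => calc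
      Cactus.insertAll (A ++ u :: ξ ++ z) sh (F.map (pos, ·) ++ ch)
        = Cactus.insertAll ((A ++ D ++ [u]) ++ ξ ++ z) (sh + D.length) ch := by
          rw [append_assoc A, cons_append, insertAll_map_append hFlast ch A _ pos sh hA]
          simp only [append_assoc, cons_append, nil_append, D]
      _ = A ++ (L ++ r) ++ z := by
          rw [he.insertAll_eq _ _ _ (by simp; omega), hL]
          simp
    nodup := nodup_cons.mpr ⟨fun h => hur (he.subset h), he.nodup⟩
    subset := cons_subset.mpr ⟨mem_append_left _ (mem_of_head? hLu),
      fun x hx => mem_append_right _ (he.subset hx)⟩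
    head?_eq := by rw [head?_append, hLu]; rfl
    getLast?_eq := by
      rw [getLast?_cons, getLast?_append, he.getLast?_eq, hLlast]
      cases r.getLast? <;> rfl
    isChain := isChain_cons.mpr ⟨fun y hy => (isChain_append.mp hLr).2.2 u hLlast y
      (he.head?_eq ▸ hy), he.isChain⟩
    valid := by
      simp only [mem_append, mem_map]
      rintro kc (⟨C, hC, rfl⟩ | hkc)
      exacts [hF.valid C hC, he.valid kc hkc]
    index_mem := by
      simp only [mem_append, mem_map]
      rintro kc (⟨C, hC, rfl⟩ | hkc)
      · simp
      · have := he.index_mem kc hkc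
        simp only [length_cons]
        omega
    sorted := by
      rw [map_append, map_map, Function.comp_def, map_const']
      refine isChain_append.mpr ⟨isChain_replicate_of_rel _ le_rfl, he.sorted, ?_⟩
      intro x hx y hy
      obtain ⟨kc, hkc, rfl⟩ := mem_map.mp (mem_of_head? hy)
      rw [eq_of_mem_replicate (mem_of_getLast? hx)]
      exact (Nat.le_succ pos).trans (he.index_mem kc hkc).1
    root_eq := by
      simp only [mem_append, mem_map]
      rintro kc (⟨C, hC, rfl⟩ | hkc)
      · simp [hF.root_eq C hC, hLu]
      · rw [show kc.1 - pos = kc.1 - (pos + 1) + 1 by have := he.index_mem kc hkc; omega]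
        exact he.root_eq kc hkc
    depth_le := by
      simp only [mem_append, mem_map]
      rintro kc (⟨C, hC, rfl⟩ | hkc)
      exacts [(hF.depth_le C hC).trans hcard_L, (he.depth_le kc hkc).trans hcard_r] }

theorem exists_isLoopErasure {n : ℕ}
    (ih : ∀ c : List V, c.length < n → IsCycleL H c → ∃ F, IsCactusForestOf H c F)
    (s : List V) (hs : s.length < n) (hch : s.IsChain H.Adj) (pos : ℕ) :
    ∃ ξ ch, IsLoopErasure H s pos ξ ch := by
  match s with
  | [] => exact ⟨[], [], .nil pos⟩
  | u :: s' =>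
    rw [length_cons] at hs
    obtain ⟨L, r, hs', hLu, hLlast, hur⟩ := exists_closed_append_of_head?_eq (s := u :: s') rfl
    have hL : L ≠ [] := by rintro rfl; simp at hLu
    have hlen : s'.length + 1 = L.length + r.length := by
      rw [← length_append, ← hs', length_cons]
    have hLpos : 0 < L.length := length_pos_iff.mpr hL
    have hLr : (L ++ r).IsChain H.Adj := hs' ▸ hch
    obtain ⟨F, hF⟩ := ih L (by omega)
      ⟨⟨hL, (isChain_append.mp hLr).1⟩, hLu.trans hLlast.symm⟩
    have hr : r.length < s'.length + 1 := by omega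
    obtain ⟨ξ, ch, he⟩ := exists_isLoopErasure ih r (by omega)
      (isChain_append.mp hLr).2.1 (pos + 1)
    exact hs' ▸ ⟨u :: ξ, _, he.cons hF hLu hur hLr⟩
termination_by s.length

theorem exists_cactus_of_not_mem {n : ℕ}
    (ih : ∀ c : List V, c.length < n → IsCycleL H c → ∃ F, IsCactusForestOf H c F)
    {v : V} {a : List V} (hva : v ∉ a) (hch : (v :: a ++ [v]).IsChain H.Adj) (ha : a.length < n) :
    ∃ C : Cactus V, CValid H C ∧ C.root = some v ∧ C.encode = v :: a ++ [v] ∧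
      C.depth ≤ (v :: a).toFinset.card := by
  have hach : a.IsChain H.Adj := (isChain_append.mp (isChain_cons.mp hch).2).1
  obtain ⟨ξ, ch, he⟩ := exists_isLoopErasure ih a ha hach 1
  have hξ : IsCycleL H (v :: ξ ++ [v]) :=
    ⟨⟨cons_ne_nil _ _,
        isChain_cons_append_singleton_of_congr he.isChain he.head?_eq he.getLast?_eq hch⟩,
      by rw [getLast?_concat]; rfl⟩
  refine ⟨.mk (v :: ξ ++ [v]) ch, .mk _ _ ?_ he.sorted ?_ ?_ he.valid, rfl, ?_, ?_⟩
  · exact isSimpleCycleL_append_singleton hξ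
      (nodup_cons.mpr ⟨fun h => hva (he.subset h), he.nodup⟩) rfl
  · intro kc hkc
    have := he.index_mem kc hkc
    simp only [length_append, length_cons]
    omega
  · intro kc hkc
    obtain ⟨hpos, hlt⟩ := he.index_mem kc hkc
    obtain ⟨k, hk⟩ := Nat.exists_eq_add_of_le' hpos
    rw [he.root_eq kc hkc, hk, cons_append, getElem?_cons_succ,
      getElem?_append_left (by omega)]
    simp
  · rw [Cactus.encode]
    simpa using he.insertAll_eq [v] [v] 0 rfl
  · rw [Cactus.depth, toFinset_cons, Finset.card_insert_of_notMem (by simpa using hva),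
      Nat.add_comm]
    exact Nat.add_le_add_right (depthList_le he.depth_le) 1

theorem IsCactusForestOf.cons {v : V} {a t : List V} {C : Cactus V} {F : List (Cactus V)}
    (hC : CValid H C) (hCv : C.root = some v) (hCe : C.encode = v :: a ++ [v])
    (hCd : C.depth ≤ (v :: a).toFinset.card) (hF : IsCactusForestOf H (v :: t) F) :
    IsCactusForestOf H (v :: a ++ v :: t) (C :: F) := by
  have hCh : C.encode.head? = some v := by rw [hCe]; rfl
  have hCl : C.encode.getLast? = some v := by rw [hCe, getLast?_concat]
  have hsub_a : (v :: a).toFinset ⊆ (v :: a ++ v :: t).toFinset := by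
    intro x; simp only [mem_toFinset, mem_cons, mem_append]; tauto
  have hsub_t : (v :: t).toFinset ⊆ (v :: a ++ v :: t).toFinset := by
    intro x; simp only [mem_toFinset, mem_cons, mem_append]; tauto
  exact {
    ne_nil := cons_ne_nil _ _
    valid := forall_mem_cons.mpr ⟨hC, hF.valid⟩
    root_eq := forall_mem_cons.mpr ⟨hCv, hF.root_eq⟩
    encode_head? := forall_mem_cons.mpr ⟨hCh, hF.encode_head?⟩
    encode_getLast? := forall_mem_cons.mpr ⟨hCl, hF.encode_getLast?⟩
    forestEncode_eq := by
      have hends :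
          ∀ q ∈ (C :: F).map Cactus.encode, q.head? = some v ∧ q.getLast? = some v := by
        simp only [map_cons, forall_mem_cons, forall_mem_map]
        exact ⟨⟨hCh, hCl⟩, fun D hD => ⟨hF.encode_head? D hD, hF.encode_getLast? D hD⟩⟩
      rw [forestEncode_eq_flatten_dropLast (by simp) hends, map_cons, map_cons, flatten_cons, hCe,
        dropLast_concat, append_assoc, ← hF.eq_flatten_dropLast rfl]
    depth_le := forall_mem_cons.mpr ⟨hCd.trans (Finset.card_le_card hsub_a),
      fun D hD => (hF.depth_le D hD).trans (Finset.card_le_card hsub_t)⟩ }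

theorem exists_isCactusForestOf : ∀ c : List V, IsCycleL H c → ∃ F, IsCactusForestOf H c F
  | [], hc => absurd rfl hc.1.1
  | [v], _ => ⟨_, isCactusForestOf_singleton v⟩
  | v :: w :: t, hc => by
    have ih (c' : List V) (_ : c'.length < t.length + 2) (hc' : IsCycleL H c') :
        ∃ F, IsCactusForestOf H c' F :=
      exists_isCactusForestOf c' hc'
    have hlast : (w :: t).getLast? = some v := by simpa [eq_comm] using hc.2
    obtain ⟨a, t', ht, hva⟩ := eq_append_cons_of_mem (mem_of_getLast? hlast)
    have hlen : t.length + 1 = a.length + t'.length + 1 := by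
      rw [← length_cons, ht, length_append, length_cons]; omega
    have hch : ((v :: a) ++ (v :: t')).IsChain H.Adj := by rw [cons_append, ← ht]; exact hc.1.2
    obtain ⟨C, hC, hCv, hCe, hCd⟩ := exists_cactus_of_not_mem ih hva
      (hch.prefix ⟨t', by simp⟩) (by omega)
    have hlast' : (v :: t').getLast? = some v := by
      rwa [ht, getLast?_append, getLast?_cons, Option.some_or, ← getLast?_cons] at hlast
    obtain ⟨F, hF⟩ := ih (v :: t') (by simp; omega)
      ⟨⟨cons_ne_nil _ _, hch.right_of_append⟩, hlast'.symm⟩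
    rw [ht]
    exact ⟨C :: F, hF.cons hC hCv hCe hCd⟩
termination_by c => c.length

end Construction

end

/-- Every cycle `c` on a finite connected graph `H` is encoded by a cactus forest
of depth at most `|V_H|` (all of whose root cycles start at the starting vertex
of `c`). -/
theorem stmt_14 {V : Type*} [Fintype V] (H : LGraph V) (hconn : H.ConnectedL)
    (c : List V) (hc : IsCycleL H c) :
    ∃ F : List (Cactus V), F ≠ [] ∧
      (∀ C ∈ F, CValid H C) ∧
      (∀ C ∈ F, Cactus.root C = c.head?) ∧
      forestEncode (F.map Cactus.encode) = c ∧
      (∀ C ∈ F, Cactus.depth C ≤ Fintype.card V) := by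
  classical
  obtain ⟨F, hF⟩ := exists_isCactusForestOf c hc
  exact ⟨F, hF.ne_nil, hF.valid, hF.root_eq, hF.forestEncode_eq,
    fun C hC => (hF.depth_le C hC).trans (Finset.card_le_univ _)⟩
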